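/- arXiv:1709.04235 — 4 statements merged into one kernel-verified Lean document; each statement's English description precedes it below -/
import Mathlib

section
/- Let (H, η) be a finite-dimensional commutative Frobenius algebra over an algebraically closed field K of characteristic 0, equipped with a distinguished basis {e_ρ}_{ρ∈Δ} indexed by a finite set Δ with an involution ρ ↦ ρ^∨, such that η(e_ρ, e_λ) = c·δ_{ρ, λ^∨} for a fixed nonzero constant c. Suppose there is a field embedding K ↪ ℂ and a ring involution γ of H (as an ℝ-algebra) given by γ(Σ v_ρ e_ρ) = Σ conj(v_ρ) e_{ρ^∨} satisfying γ(x × y) = γ(x) × γ(y). If x ∈ H satisfies x × x = 0, then x = 0; hence H is reduced, and therefore semisimple. -/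
/-- A commutative Frobenius algebra `(H, η)` over `ℂ` with basis `{e_ρ}_{ρ ∈ Δ}` indexed
by a finite set with involution `σ`, metric `η(e_ρ, e_λ) = c·δ_{λ, σρ}` (`c ≠ 0`), and a
multiplicative conjugate-linear involution `γ(Σ v_ρ e_ρ) = Σ conj(v_ρ) e_{σρ}`, has no
nonzero square-zero elements; hence it is reduced, and therefore semisimple. -/
theorem stmt3 (Δ : Type*) [Fintype Δ] [DecidableEq Δ]
    (σ : Δ → Δ) (hσ : Function.Involutive σ)
    (H : Type*) [CommRing H] [Algebra ℂ H]
    (e : Module.Basis Δ ℂ H) (c : ℂ) (hc : c ≠ 0)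
    (η : H →ₗ[ℂ] H →ₗ[ℂ] ℂ)
    (hη : ∀ ρ lam : Δ, η (e ρ) (e lam) = if lam = σ ρ then c else 0)
    (hFrob : ∀ x y z : H, η x (y * z) = η (x * y) z)
    (γ : H → H)
    (hγdef : ∀ x : H, γ x = ∑ ρ : Δ, (starRingEnd ℂ) (e.repr x ρ) • e (σ ρ))
    (hγmul : ∀ x y : H, γ (x * y) = γ x * γ y) :
    (∀ x : H, x * x = 0 → x = 0) ∧ IsReduced H ∧ IsSemisimpleRing H := by
  have hrepr : ∀ (x : H) (lam : Δ), e.repr (γ x) lam = (starRingEnd ℂ) (e.repr x (σ lam)) := by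
    intro x lam
    rw [hγdef, map_sum]
    have : ∀ ρ : Δ, e.repr ((starRingEnd ℂ) (e.repr x ρ) • e (σ ρ)) lam
        = if ρ = σ lam then (starRingEnd ℂ) (e.repr x ρ) else 0 := by
      intro ρ
      rw [map_smul, e.repr_self]
      by_cases h : ρ = σ lam
      · subst h; simp [hσ lam]
      · have : σ ρ ≠ lam := fun hcon => h (by rw [← hcon, hσ ρ])
        simp [Finsupp.single_apply, this, h]
    simp only [Finsupp.coe_finset_sum, Finset.sum_apply, this]
    simp
  -- γ is an involution
  have hγγ : ∀ x : H, γ (γ x) = x := by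
    intro x
    conv_lhs => rw [hγdef]
    simp only [hrepr, RingHomCompTriple.comp_apply, Complex.conj_conj]
    calc ∑ ρ : Δ, e.repr x (σ ρ) • e (σ ρ) = ∑ ρ : Δ, e.repr x ρ • e ρ :=
          Fintype.sum_equiv (hσ.toPerm σ) _ _ (fun ρ => rfl)
      _ = x := e.sum_repr x
  -- key positivity
  have key : ∀ x : H, η x (γ x) = 0 → x = 0 := by
    intro x hx
    have hxe : ∀ μ : Δ, η x (e μ) = e.repr x (σ μ) * c := by
      intro μ
      conv_lhs => rw [← e.sum_repr x]
      rw [map_sum, LinearMap.coe_sum, Finset.sum_apply]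
      have h2 : ∀ lam : Δ, (η (e.repr x lam • e lam)) (e μ)
          = if lam = σ μ then e.repr x lam * c else 0 := by
        intro lam
        rw [map_smul, LinearMap.smul_apply, hη, smul_eq_mul]
        by_cases h : lam = σ μ
        · have h' : μ = σ lam := by rw [h, hσ μ]
          rw [if_pos h', if_pos h]
        · have h' : μ ≠ σ lam := fun hcon => h (by rw [hcon, hσ lam])
          rw [if_neg h', if_neg h, mul_zero]
      simp only [h2, Finset.sum_ite_eq', Finset.mem_univ, if_true]
    have hval : η x (γ x) = c * ∑ ρ : Δ, (Complex.normSq (e.repr x ρ) : ℂ) := by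
      rw [hγdef, map_sum]
      have h3 : ∀ ρ : Δ, (η x) ((starRingEnd ℂ) (e.repr x ρ) • e (σ ρ))
          = c * (Complex.normSq (e.repr x ρ) : ℂ) := by
        intro ρ
        rw [map_smul, smul_eq_mul, hxe, hσ ρ, ← Complex.mul_conj]
        ring
      simp only [h3]
      rw [← Finset.mul_sum]
    rw [hval, mul_eq_zero] at hx
    rcases hx with h | h
    · exact absurd h hc
    · rw [← Complex.ofReal_sum, Complex.ofReal_eq_zero] at h
      have hz : ∀ ρ ∈ Finset.univ, Complex.normSq (e.repr x ρ) = 0 :=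
        (Finset.sum_eq_zero_iff_of_nonneg (fun ρ _ => Complex.normSq_nonneg _)).mp h
      have h0 : e.repr x = 0 := by
        ext ρ
        exact Complex.normSq_eq_zero.mp (hz ρ (Finset.mem_univ ρ))
      simpa using congrArg e.repr.symm h0
  -- square-zero implies zero
  have hsq : ∀ x : H, x * x = 0 → x = 0 := by
    intro x hxx
    have h1 : (x * γ x) * γ (x * γ x) = 0 := by
      rw [hγmul, hγγ]
      calc (x * γ x) * (γ x * x) = (x * x) * (γ x * γ x) := by ring
        _ = 0 := by rw [hxx, zero_mul]
    have h2 : η (x * γ x) (γ (x * γ x)) = 0 := by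
      have := hFrob 1 (x * γ x) (γ (x * γ x))
      rw [one_mul, h1, map_zero] at this
      exact this.symm
    have h3 : x * γ x = 0 := key _ h2
    apply key
    have := hFrob 1 x (γ x)
    rw [one_mul, h3, map_zero] at this
    exact this.symm
  refine ⟨hsq, ?_, ?_⟩
  · constructor
    intro x hx
    obtain ⟨n, hn⟩ := hx
    clear hγmul hγdef hη hFrob hrepr hγγ key
    induction n using Nat.strong_induction_on generalizing x with
    | _ n ih =>
      match n with
      | 0 => rw [pow_zero] at hn; calc x = x * 1 := (mul_one x).symm
               _ = x * 0 := by rw [hn]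
               _ = 0 := mul_zero x
      | 1 => rwa [pow_one] at hn
      | (n + 2) =>
        have h : (x ^ (n + 1)) * (x ^ (n + 1)) = 0 := by
          have : x ^ (n + 1) * x ^ (n + 1) = x ^ (n + 2) * x ^ n := by ring
          rw [this, hn, zero_mul]
        have := hsq _ h
        exact ih (n + 1) (by omega) x this
  · have : Module.Finite ℂ H := Module.Finite.of_basis e
    have : IsArtinianRing H := isArtinian_of_tower ℂ inferInstance
    have : IsReduced H := by
      constructor
      intro x hx
      obtain ⟨n, hn⟩ := hx
      clear hγmul hγdef hη hFrob hrepr hγγ key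
      induction n using Nat.strong_induction_on generalizing x with
      | _ n ih =>
        match n with
        | 0 => rw [pow_zero] at hn; calc x = x * 1 := (mul_one x).symm
                 _ = x * 0 := by rw [hn]
                 _ = 0 := mul_zero x
        | 1 => rwa [pow_one] at hn
        | (n + 2) =>
          have h : (x ^ (n + 1)) * (x ^ (n + 1)) = 0 := by
            have : x ^ (n + 1) * x ^ (n + 1) = x ^ (n + 2) * x ^ n := by ring
            rw [this, hn, zero_mul]
          have := hsq _ h
          exact ih (n + 1) (by omega) x this
    exact IsArtinianRing.isSemisimpleRing_of_isReduced H
end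

section
/- For an odd prime p and integers m ∈ {0, 1, ..., (p-3)/2} and j ∈ {1, ..., p-1}, the values sin((2m+1)jπ/p)/sin(jπ/p) satisfy: Tr_*(j₁) and Tr_*(j₂) agree on all integer indices m ∈ {0,...,(p-3)/2} if and only if j₁ = j₂ or j₁ + j₂ = p. Here Tr_*(j)(m) := sin((2m+1)jπ/p)/sin(jπ/p). -/
/-- For an odd prime `p` and `j₁, j₂ ∈ {1, …, p-1}`, the characters
`Tr_*(j)(m) = sin((2m+1)jπ/p)/sin(jπ/p)` agree on all integer indices
`m ∈ {0, …, (p-3)/2}` if and only if `j₁ = j₂` or `j₁ + j₂ = p`. -/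
theorem stmt10 (p : ℕ) (hp : p.Prime) (hodd : Odd p)
    (j₁ j₂ : ℕ) (hj₁ : j₁ ∈ Finset.Icc 1 (p - 1)) (hj₂ : j₂ ∈ Finset.Icc 1 (p - 1)) :
    ((∀ m : ℕ, m ≤ (p - 3) / 2 →
        Real.sin ((2 * (m : ℝ) + 1) * j₁ * Real.pi / p) / Real.sin ((j₁ : ℝ) * Real.pi / p)
          = Real.sin ((2 * (m : ℝ) + 1) * j₂ * Real.pi / p) /
              Real.sin ((j₂ : ℝ) * Real.pi / p))
      ↔ (j₁ = j₂ ∨ j₁ + j₂ = p)) := by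
  simp only [Finset.mem_Icc] at hj₁ hj₂
  have hp3 : 3 ≤ p := by
    rcases hodd with ⟨k, hk⟩
    have := hp.two_le
    omega
  have hppos : (0:ℝ) < p := by positivity
  have hpi := Real.pi_pos
  -- basic facts about x_j = j*π/p
  have key : ∀ j : ℕ, 1 ≤ j → j ≤ p - 1 →
      0 < (j:ℝ) * Real.pi / p ∧ (j:ℝ) * Real.pi / p < Real.pi ∧
      0 < Real.sin ((j:ℝ) * Real.pi / p) := by
    intro j h1 h2
    have hj0 : (0:ℝ) < j := by exact_mod_cast h1
    have hjp : (j:ℝ) < p := by exact_mod_cast (by omega : j < p)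
    have hx0 : 0 < (j:ℝ) * Real.pi / p := by positivity
    have hx1 : (j:ℝ) * Real.pi / p < Real.pi := by
      rw [div_lt_iff₀ hppos]
      calc (j:ℝ) * Real.pi = Real.pi * j := by ring
        _ < Real.pi * p := by exact (mul_lt_mul_iff_right₀ hpi).mpr hjp
        _ = Real.pi * p := rfl
    exact ⟨hx0, hx1, Real.sin_pos_of_pos_of_lt_pi hx0 hx1⟩
  obtain ⟨hx₁0, hx₁1, hs₁⟩ := key j₁ hj₁.1 hj₁.2
  obtain ⟨hx₂0, hx₂1, hs₂⟩ := key j₂ hj₂.1 hj₂.2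
  constructor
  · intro h
    rcases eq_or_lt_of_le hp3 with h3 | h5
    · -- p = 3 : conclusion holds for all admissible j₁ j₂
      omega
    have h5 : 5 ≤ p := by
      rcases hodd with ⟨k, hk⟩; omega
    have hm1 : (1:ℕ) ≤ (p - 3) / 2 := by omega
    have h1 := h 1 hm1
    norm_num at h1
    -- rewrite sin(3x)/sin x = 3 - 4 sin x ^ 2
    have ratio : ∀ j : ℕ, 0 < Real.sin ((j:ℝ) * Real.pi / p) →
        Real.sin (3 * (j:ℝ) * Real.pi / p) / Real.sin ((j:ℝ) * Real.pi / p)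
          = 3 - 4 * Real.sin ((j:ℝ) * Real.pi / p) ^ 2 := by
      intro j hs
      have harg : 3 * (j:ℝ) * Real.pi / p = 3 * ((j:ℝ) * Real.pi / p) := by ring
      rw [harg, Real.sin_three_mul]
      field_simp
    rw [ratio j₁ hs₁, ratio j₂ hs₂] at h1
    have hsq : Real.sin ((j₁:ℝ) * Real.pi / p) ^ 2 = Real.sin ((j₂:ℝ) * Real.pi / p) ^ 2 := by
      linarith
    have hse : Real.sin ((j₁:ℝ) * Real.pi / p) = Real.sin ((j₂:ℝ) * Real.pi / p) := by
      nlinarith [sq_nonneg (Real.sin ((j₁:ℝ) * Real.pi / p) - Real.sin ((j₂:ℝ) * Real.pi / p)),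
        sq_nonneg (Real.sin ((j₁:ℝ) * Real.pi / p) + Real.sin ((j₂:ℝ) * Real.pi / p))]
    set x₁ := (j₁:ℝ) * Real.pi / p
    set x₂ := (j₂:ℝ) * Real.pi / p
    have hdiff : 2 * Real.sin ((x₁ - x₂) / 2) * Real.cos ((x₁ + x₂) / 2) = 0 := by
      rw [← Real.sin_sub_sin]; linarith
    rcases mul_eq_zero.mp hdiff with hA | hB
    · -- sin ((x₁-x₂)/2) = 0, argument in (-π/2, π/2), so x₁ = x₂
      have hA' : Real.sin ((x₁ - x₂) / 2) = 0 := by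
        rcases mul_eq_zero.mp hA with h' | h'
        · norm_num at h'
        · exact h'
      obtain ⟨n, hn⟩ := Real.sin_eq_zero_iff.mp hA'
      have hb1 : -Real.pi / 2 < (x₁ - x₂) / 2 := by linarith
      have hb2 : (x₁ - x₂) / 2 < Real.pi / 2 := by linarith
      have hn0 : n = 0 := by
        by_contra hne
        rcases lt_or_gt_of_ne hne with hlt | hgt
        · have h' : (n:ℝ) ≤ -1 := by exact_mod_cast (by omega : n ≤ -1)
          have hmul : (n:ℝ) * Real.pi ≤ -1 * Real.pi :=
            mul_le_mul_of_nonneg_right h' hpi.le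
          linarith
        · have h' : (1:ℝ) ≤ n := by exact_mod_cast (by omega : 1 ≤ n)
          have hmul : 1 * Real.pi ≤ (n:ℝ) * Real.pi :=
            mul_le_mul_of_nonneg_right h' hpi.le
          linarith
      rw [hn0] at hn
      have hx : x₁ = x₂ := by
        have : (x₁ - x₂)/2 = 0 := by rw [← hn]; norm_num
        linarith
      left
      have hne : Real.pi / (p:ℝ) ≠ 0 := by positivity
      have e1 : (j₁:ℝ) * (Real.pi / p) = x₁ := by simp only [x₁]; ring
      have e2 : (j₂:ℝ) * (Real.pi / p) = x₂ := by simp only [x₂]; ring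
      have : (j₁:ℝ) = j₂ := mul_right_cancel₀ hne (by rw [e1, e2, hx])
      exact_mod_cast this
    · -- cos ((x₁+x₂)/2) = 0, argument in (0, π), so x₁ + x₂ = π
      obtain ⟨k, hk⟩ := Real.cos_eq_zero_iff.mp hB
      have hb1 : 0 < (x₁ + x₂) / 2 := by linarith
      have hb2 : (x₁ + x₂) / 2 < Real.pi := by linarith
      have hk0 : k = 0 := by
        by_contra hne
        rcases lt_or_gt_of_ne hne with hlt | hgt
        · have h' : (2*(k:ℝ)+1) ≤ -1 := by
            have : (k:ℝ) ≤ -1 := by exact_mod_cast (by omega : k ≤ -1)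
            linarith
          have hmul : (2*(k:ℝ)+1) * Real.pi ≤ -1 * Real.pi :=
            mul_le_mul_of_nonneg_right h' hpi.le
          linarith
        · have h' : (3:ℝ) ≤ 2*(k:ℝ)+1 := by
            have : (1:ℝ) ≤ k := by exact_mod_cast (by omega : 1 ≤ k)
            linarith
          have hmul : (3:ℝ) * Real.pi ≤ (2*(k:ℝ)+1) * Real.pi :=
            mul_le_mul_of_nonneg_right h' hpi.le
          linarith
      rw [hk0] at hk
      have hx : x₁ + x₂ = Real.pi := by
        have : (x₁ + x₂)/2 = Real.pi / 2 := by rw [hk]; ring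
        linarith
      right
      have hne : Real.pi / (p:ℝ) ≠ 0 := by positivity
      have hp0 : (p:ℝ) ≠ 0 := ne_of_gt hppos
      have e1 : ((j₁:ℝ) + j₂) * (Real.pi / p) = x₁ + x₂ := by simp only [x₁, x₂]; ring
      have e2 : (p:ℝ) * (Real.pi / p) = Real.pi := by field_simp
      have : (j₁:ℝ) + j₂ = p := mul_right_cancel₀ hne (by rw [e1, e2, hx])
      exact_mod_cast this
  · rintro (rfl | hsum)
    · intro m _; rfl
    · intro m _
      have hcast : (j₂:ℝ) = p - j₁ := by
        have : (j₁:ℝ) + j₂ = p := by exact_mod_cast congrArg (Nat.cast : ℕ → ℝ) hsum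
        linarith
      have hp0 : (p:ℝ) ≠ 0 := ne_of_gt hppos
      have hnum : Real.sin ((2 * (m : ℝ) + 1) * j₂ * Real.pi / p)
          = Real.sin ((2 * (m : ℝ) + 1) * j₁ * Real.pi / p) := by
        have harg : (2 * (m : ℝ) + 1) * j₂ * Real.pi / p
            = (Real.pi - (2 * (m : ℝ) + 1) * j₁ * Real.pi / p) + m * (2 * Real.pi) := by
          rw [hcast]; field_simp; ring
        rw [harg, Real.sin_add_nat_mul_two_pi, Real.sin_pi_sub]
      have hden : Real.sin ((j₂:ℝ) * Real.pi / p) = Real.sin ((j₁:ℝ) * Real.pi / p) := by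
        have harg : (j₂:ℝ) * Real.pi / p = Real.pi - (j₁:ℝ) * Real.pi / p := by
          rw [hcast]; field_simp
        rw [harg, Real.sin_pi_sub]
      rw [hnum, hden]
end

section
/- Let p be an odd prime, and for j ∈ {1, ..., p-1} define Tr_*(j) : e_m ↦ sin((2m+1)jπ/p)/sin(jπ/p) on the SL₂ level-(p-2) fusion ring basis {e_m : m ∈ {0, 1/2, ..., (p-2)/2}}. Then each Tr_*(j) is a ring homomorphism from the fusion ring to ℂ, i.e., Tr_*(j)(e_a)·Tr_*(j)(e_b) = Σ_c N_{a,b,c}·Tr_*(j)(e_c) where the fusion coefficients N_{a,b,c} ∈ {0,1} are 1 exactly when a+b+c ∈ ℤ, a+b+c ≤ p-2 and |b-c| ≤ a ≤ b+c. -/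
open scoped Classical

lemma sin_mul_sin' (X Y : ℝ) :
    Real.sin X * Real.sin Y = (Real.cos (X - Y) - Real.cos (X + Y)) / 2 := by
  rw [Real.cos_sub, Real.cos_add]; ring

lemma fusion_key (p : ℕ) (hp : 3 ≤ p) (θ : ℝ)
    (hrefl : ∀ x : ℝ, Real.cos (2 * p * θ - x) = Real.cos x)
    (a b : ℕ) (ha : a ≤ p - 2) (hb : b ≤ p - 2) (hba : b ≤ a) :
    Real.sin (((a : ℝ) + 1) * θ) * Real.sin (((b : ℝ) + 1) * θ)
      = ∑ c ∈ Finset.range (p - 1),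
          (if (a + b + c) % 2 = 0 ∧ a + b + c ≤ 2 * p - 4 ∧ b ≤ a + c ∧ c ≤ a + b ∧ a ≤ b + c
            then Real.sin (((c : ℝ) + 1) * θ) * Real.sin θ else 0) := by
  set K := min b (p - 2 - a) with hK
  have hfilter : (Finset.range (p - 1)).filter
      (fun c => (a + b + c) % 2 = 0 ∧ a + b + c ≤ 2 * p - 4 ∧ b ≤ a + c ∧ c ≤ a + b ∧ a ≤ b + c)
      = (Finset.range (K + 1)).image (fun k => (a - b) + 2 * k) := by
    ext c
    simp only [Finset.mem_filter, Finset.mem_image, Finset.mem_range]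
    constructor
    · rintro ⟨hc, h1, h2, h3, h4, h5⟩
      exact ⟨(c - (a - b)) / 2, by omega, by omega⟩
    · rintro ⟨k, hk, rfl⟩
      omega
  rw [← Finset.sum_filter, hfilter,
    Finset.sum_image (by intro x _ y _ h; dsimp only at h; omega)]
  have hcast : ∀ k : ℕ, ((a - b + 2 * k : ℕ) : ℝ) = (a : ℝ) - b + 2 * k := by
    intro k; push_cast [Nat.cast_sub hba]; ring
  have hterm : ∀ k ∈ Finset.range (K + 1),
      Real.sin ((((a - b + 2 * k : ℕ) : ℝ) + 1) * θ) * Real.sin θ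
        = ((fun k : ℕ => Real.cos (((a : ℝ) - b + 2 * k) * θ)) k
            - (fun k : ℕ => Real.cos (((a : ℝ) - b + 2 * k) * θ)) (k + 1)) / 2 := by
    intro k _
    rw [sin_mul_sin', hcast]
    push_cast
    ring_nf
  rw [Finset.sum_congr rfl hterm, ← Finset.sum_div, Finset.sum_range_sub']
  rw [sin_mul_sin']
  have h2 : Real.cos (((a : ℝ) - b + 2 * ((K : ℕ) + 1)) * θ)
      = Real.cos (((a : ℝ) + 1) * θ + ((b : ℝ) + 1) * θ) := by
    rcases le_total b (p - 2 - a) with h | h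
    · rw [hK, min_eq_left h]
      congr 1
      ring
    · rw [hK, min_eq_right h]
      have hc : ((p - 2 - a : ℕ) : ℝ) = (p : ℝ) - 2 - a := by
        push_cast [Nat.cast_sub (by omega : a ≤ p - 2), Nat.cast_sub (by omega : 2 ≤ p)]
        ring
      rw [hc]
      have : ((a : ℝ) - b + 2 * ((p : ℝ) - 2 - a + 1)) * θ
          = 2 * p * θ - (((a : ℝ) + 1) * θ + ((b : ℝ) + 1) * θ) := by ring
      rw [this, hrefl]
  rw [← h2]
  push_cast
  ring_nf

lemma fusion_condIff (p : ℕ) (hp : 3 ≤ p) (a b c : ℕ) :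
    ((∃ z : ℤ, (a : ℚ) / 2 + (b : ℚ) / 2 + (c : ℚ) / 2 = z)
      ∧ (a : ℚ) / 2 + (b : ℚ) / 2 + (c : ℚ) / 2 ≤ (p : ℚ) - 2
      ∧ |(b : ℚ) / 2 - (c : ℚ) / 2| ≤ (a : ℚ) / 2
      ∧ (a : ℚ) / 2 ≤ (b : ℚ) / 2 + (c : ℚ) / 2)
    ↔ ((a + b + c) % 2 = 0 ∧ a + b + c ≤ 2 * p - 4 ∧ b ≤ a + c ∧ c ≤ a + b ∧ a ≤ b + c) := by
  rw [abs_sub_le_iff]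
  constructor
  · rintro ⟨⟨z, hz⟩, h2, ⟨h3, h4⟩, h5⟩
    have hz' : ((a + b + c : ℕ) : ℚ) = ((2 * z : ℤ) : ℚ) := by push_cast; linarith
    have hz2 : (a + b + c : ℤ) = 2 * z := by exact_mod_cast hz'
    have h2' : ((a + b + c : ℕ) : ℚ) + 4 ≤ ((2 * p : ℕ) : ℚ) := by push_cast; linarith
    have h2n : (a + b + c) + 4 ≤ 2 * p := by exact_mod_cast h2'
    have h3' : ((b : ℚ)) ≤ (a : ℚ) + c := by linarith
    have h4' : ((c : ℚ)) ≤ (a : ℚ) + b := by linarith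
    have h5' : ((a : ℚ)) ≤ (b : ℚ) + c := by linarith
    have h3n : b ≤ a + c := by exact_mod_cast h3'
    have h4n : c ≤ a + b := by exact_mod_cast h4'
    have h5n : a ≤ b + c := by exact_mod_cast h5'
    omega
  · rintro ⟨h1, h2, h3, h4, h5⟩
    refine ⟨⟨((a + b + c) / 2 : ℕ), ?_⟩, ?_, ⟨?_, ?_⟩, ?_⟩
    · have : ((a + b + c) / 2 : ℕ) * 2 = a + b + c := by omega
      have h' : (((a + b + c) / 2 : ℕ) : ℚ) * 2 = ((a + b + c : ℕ) : ℚ) := by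
        exact_mod_cast congrArg (Nat.cast : ℕ → ℚ) this
      push_cast at h'
      rw [Int.cast_natCast]
      linarith
    · have : ((a + b + c : ℕ) : ℚ) + 4 ≤ ((2 * p : ℕ) : ℚ) := by
        exact_mod_cast Nat.cast_le.2 (by omega : (a + b + c) + 4 ≤ 2 * p)
      push_cast at this
      linarith
    · have : ((b : ℚ)) ≤ (a : ℚ) + c := by exact_mod_cast Nat.cast_le.2 h3
      linarith
    · have : ((c : ℚ)) ≤ (a : ℚ) + b := by exact_mod_cast Nat.cast_le.2 h4
      linarith
    · have : ((a : ℚ)) ≤ (b : ℚ) + c := by exact_mod_cast Nat.cast_le.2 h5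
      linarith

/-- Each `Tr_*(j)` is a character of the `SL₂` level-`(p-2)` fusion ring:
`Tr_*(j)(e_a)·Tr_*(j)(e_b) = Σ_c N_{a,b,c}·Tr_*(j)(e_c)`, where half-integer indices
`m ∈ {0, 1/2, …, (p-2)/2}` are encoded by doubled indices in `Fin (p-1)` (so
`Tr_*(j)(e_a) = sin((a+1)jπ/p)/sin(jπ/p)` for the doubled index `a`), and
`N_{a,b,c} = 1` iff `a+b+c ∈ ℤ`, `a+b+c ≤ p-2` and `|b-c| ≤ a ≤ b+c`. -/
theorem stmt13 (p : ℕ) (hp : p.Prime) (hodd : Odd p)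
    (j : ℕ) (hj : j ∈ Finset.Icc 1 (p - 1)) (a b : Fin (p - 1)) :
    (Real.sin (((a : ℕ) + 1 : ℝ) * j * Real.pi / p) / Real.sin ((j : ℝ) * Real.pi / p)) *
      (Real.sin (((b : ℕ) + 1 : ℝ) * j * Real.pi / p) / Real.sin ((j : ℝ) * Real.pi / p))
    = ∑ c : Fin (p - 1),
        (if (∃ z : ℤ, ((a : ℕ) : ℚ) / 2 + ((b : ℕ) : ℚ) / 2 + ((c : ℕ) : ℚ) / 2 = z)
            ∧ ((a : ℕ) : ℚ) / 2 + ((b : ℕ) : ℚ) / 2 + ((c : ℕ) : ℚ) / 2 ≤ (p : ℚ) - 2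
            ∧ |((b : ℕ) : ℚ) / 2 - ((c : ℕ) : ℚ) / 2| ≤ ((a : ℕ) : ℚ) / 2
            ∧ ((a : ℕ) : ℚ) / 2 ≤ ((b : ℕ) : ℚ) / 2 + ((c : ℕ) : ℚ) / 2
          then (1 : ℝ) else 0) *
          (Real.sin (((c : ℕ) + 1 : ℝ) * j * Real.pi / p) /
            Real.sin ((j : ℝ) * Real.pi / p)) := by
  have hp3 : 3 ≤ p := by
    obtain ⟨k, hk⟩ := hodd
    have := hp.two_le
    omega
  rw [Finset.mem_Icc] at hj
  obtain ⟨hj1, hj2⟩ := hj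
  set θ : ℝ := (j : ℝ) * Real.pi / p with hθ
  have hppos : (0 : ℝ) < p := by positivity
  have hθpos : 0 < θ := by
    have : (0 : ℝ) < j := by exact_mod_cast Nat.pos_of_ne_zero (by omega)
    rw [hθ]
    positivity
  have hθlt : θ < Real.pi := by
    rw [hθ, div_lt_iff₀ hppos]
    have hjp : (j : ℝ) < p := by exact_mod_cast (by omega : j < p)
    nlinarith [Real.pi_pos]
  have hs : Real.sin θ ≠ 0 := ne_of_gt (Real.sin_pos_of_pos_of_lt_pi hθpos hθlt)
  have hrefl : ∀ x : ℝ, Real.cos (2 * p * θ - x) = Real.cos x := by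
    intro x
    have : 2 * (p : ℝ) * θ = ((j : ℤ) : ℝ) * (2 * Real.pi) := by
      rw [hθ]
      field_simp
      push_cast
      ring
    rw [this, Real.cos_int_mul_two_pi_sub]
  have harg : ∀ m : ℕ, ((m : ℝ) + 1) * j * Real.pi / p = ((m : ℝ) + 1) * θ := by
    intro m; rw [hθ]; ring
  simp only [harg]
  have ha2 : (a : ℕ) ≤ p - 2 := by have := a.isLt; omega
  have hb2 : (b : ℕ) ≤ p - 2 := by have := b.isLt; omega
  rw [Fin.sum_univ_eq_sum_range (fun c : ℕ =>
    (if (∃ z : ℤ, ((a : ℕ) : ℚ) / 2 + ((b : ℕ) : ℚ) / 2 + (c : ℚ) / 2 = z)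
        ∧ ((a : ℕ) : ℚ) / 2 + ((b : ℕ) : ℚ) / 2 + (c : ℚ) / 2 ≤ (p : ℚ) - 2
        ∧ |((b : ℕ) : ℚ) / 2 - (c : ℚ) / 2| ≤ ((a : ℕ) : ℚ) / 2
        ∧ ((a : ℕ) : ℚ) / 2 ≤ ((b : ℕ) : ℚ) / 2 + (c : ℚ) / 2
      then (1 : ℝ) else 0) *
      (Real.sin (((c : ℝ) + 1) * θ) / Real.sin θ)) (p - 1)]
  simp only [fusion_condIff p hp3]
  rcases le_total (b : ℕ) (a : ℕ) with hba | hab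
  · rw [div_mul_div_comm, fusion_key p hp3 θ hrefl a b ha2 hb2 hba, Finset.sum_div]
    refine Finset.sum_congr rfl fun c _ => ?_
    split_ifs with h
    · rw [one_mul]
      field_simp
    · simp
  · rw [div_mul_div_comm, mul_comm (Real.sin ((((a : ℕ) : ℝ) + 1) * θ))
        (Real.sin ((((b : ℕ) : ℝ) + 1) * θ)),
      fusion_key p hp3 θ hrefl b a hb2 ha2 hab, Finset.sum_div]
    refine Finset.sum_congr rfl fun c _ => ?_
    have hcc : (((b : ℕ) + a + c) % 2 = 0 ∧ (b : ℕ) + a + c ≤ 2 * p - 4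
          ∧ (a : ℕ) ≤ b + c ∧ c ≤ (b : ℕ) + a ∧ (b : ℕ) ≤ a + c)
        ↔ (((a : ℕ) + b + c) % 2 = 0 ∧ (a : ℕ) + b + c ≤ 2 * p - 4
          ∧ (b : ℕ) ≤ a + c ∧ c ≤ (a : ℕ) + b ∧ (a : ℕ) ≤ b + c) := by omega
    rw [if_congr hcc rfl rfl]
    split_ifs with h
    · rw [one_mul]
      field_simp
    · simp
end

section
/- Let p be an odd prime and θ = jπ/p for some j ∈ {1, ..., p-1}. For a, b ∈ {0, 1/2, ..., (p-2)/2}, the product formula sin((2a+1)θ)·sin((2b+1)θ)/sin²θ = Σ_{c=|a-b|}^{min(a+b, p-2-a-b)} sin((2c+1)θ)/sin θ holds, where c ranges over values with c ≡ a+b mod 1 (i.e., a+b+c ∈ ℤ) in steps of 1. -/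
lemma cos_pair_stmt14 (θ x y : ℝ) :
    Real.cos (x * θ) - Real.cos ((x + 2 * y) * θ) = 2 * Real.sin ((x + y) * θ) * Real.sin (y * θ) := by
  rw [Real.cos_sub_cos,
    show (x * θ + (x + 2 * y) * θ) / 2 = (x + y) * θ by ring,
    show (x * θ - (x + 2 * y) * θ) / 2 = -(y * θ) by ring, Real.sin_neg]
  ring

lemma sinprod_stmt14 (θ x : ℝ) (n : ℕ) :
    Real.sin ((x + n + 1) * θ) * Real.sin ((n + 1) * θ)
      = ∑ k ∈ Finset.range (n + 1), Real.sin θ * Real.sin ((x + 2 * k + 1) * θ) := by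
  have h : ∀ k : ℕ, Real.sin θ * Real.sin ((x + 2 * k + 1) * θ)
      = Real.cos ((x + 2 * (k:ℝ)) * θ) / 2 - Real.cos ((x + 2 * ((k:ℝ) + 1)) * θ) / 2 := by
    intro k
    have := cos_pair_stmt14 θ (x + 2 * k) 1
    rw [show (x + 2*(k:ℝ)) + 2*1 = x + 2*((k:ℝ)+1) by ring,
      show (x + 2*(k:ℝ)) + 1 = x + 2*(k:ℝ) + 1 by ring, one_mul] at this
    linarith
  calc Real.sin ((x + n + 1) * θ) * Real.sin ((n + 1) * θ)
      = Real.cos (x * θ) / 2 - Real.cos ((x + 2 * ((n:ℝ) + 1)) * θ) / 2 := by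
        have := cos_pair_stmt14 θ x ((n:ℝ) + 1)
        rw [show x + ((n:ℝ) + 1) = x + (n:ℝ) + 1 by ring] at this
        linarith
    _ = ∑ k ∈ Finset.range (n + 1),
          (Real.cos ((x + 2 * (k:ℝ)) * θ) / 2 - Real.cos ((x + 2 * ((k:ℝ) + 1)) * θ) / 2) := by
        have := Finset.sum_range_sub' (fun k : ℕ => Real.cos ((x + 2 * (k:ℝ)) * θ) / 2) (n+1)
        push_cast at this
        rw [this]
        norm_num
    _ = ∑ k ∈ Finset.range (n + 1), Real.sin θ * Real.sin ((x + 2 * k + 1) * θ) :=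
        Finset.sum_congr rfl fun k _ => (h k).symm

/-- Truncated product formula at `θ = jπ/p`: for half-integers `a, b ∈ {0, 1/2, …, (p-2)/2}`
(encoded by doubled indices `a, b ≤ p-2`),
`sin((2a+1)θ)·sin((2b+1)θ)/sin²θ = Σ_{c=|a-b|}^{min(a+b, p-2-a-b)} sin((2c+1)θ)/sin θ`,
the sum running over `c` with `a+b+c ∈ ℤ` in steps of `1` (doubled: `c' = |a'-b'| + 2k`). -/
theorem stmt14 (p : ℕ) (hp : p.Prime) (hodd : Odd p)
    (j : ℕ) (hj : j ∈ Finset.Icc 1 (p - 1))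
    (a b : ℕ) (ha : a ≤ p - 2) (hb : b ≤ p - 2) :
    Real.sin (((a : ℝ) + 1) * j * Real.pi / p) * Real.sin (((b : ℝ) + 1) * j * Real.pi / p) /
        Real.sin ((j : ℝ) * Real.pi / p) ^ 2
      = ∑ k ∈ Finset.range
          ((min (a + b) (2 * (p - 2) - (a + b)) - (max a b - min a b)) / 2 + 1),
          Real.sin ((((max a b - min a b) + 2 * k + 1 : ℕ) : ℝ) * j * Real.pi / p) /
            Real.sin ((j : ℝ) * Real.pi / p) := by
  obtain ⟨hj1, hj2⟩ := Finset.mem_Icc.mp hj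
  have hp2 : p ≠ 2 := by rintro rfl; exact (Nat.not_odd_iff_even.mpr (by decide)) hodd
  have hp3 : 3 ≤ p := by have := hp.two_le; omega
  set θ : ℝ := (j : ℝ) * Real.pi / p with hθdef
  have hppos : (0:ℝ) < p := by positivity
  have hθpos : 0 < θ := by
    have : (0:ℝ) < j := by exact_mod_cast Nat.lt_of_lt_of_le Nat.zero_lt_one hj1
    rw [hθdef]; positivity
  have hθlt : θ < Real.pi := by
    rw [hθdef, div_lt_iff₀ hppos]
    have hjp : (j:ℝ) < p := by exact_mod_cast (by omega : j < p)
    nlinarith [Real.pi_pos]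
  have hs : Real.sin θ ≠ 0 := ne_of_gt (Real.sin_pos_of_pos_of_lt_pi hθpos hθlt)
  have hpθ : (p:ℝ) * θ = (j:ℝ) * Real.pi := by
    rw [hθdef]; field_simp
  have hflip : ∀ x : ℕ, x ≤ 2*p → Real.sin (((2*p - x : ℕ):ℝ) * θ) = - Real.sin ((x:ℝ)*θ) := by
    intro x hx
    have hc : ((2*p - x : ℕ):ℝ) = 2*(p:ℝ) - x := by
      push_cast [Nat.cast_sub hx]; ring
    rw [hc, show (2*(p:ℝ) - x) * θ = (j:ℤ) * (2*Real.pi) - (x:ℝ)*θ by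
      push_cast; nlinarith [hpθ]]
    exact Real.sin_int_mul_two_pi_sub ((x:ℝ)*θ) j
  set M := max a b with hMdef
  set m0 := min a b with hm0def
  set d := M - m0 with hddef
  have hMle : M ≤ p - 2 := by omega
  have harg : ∀ x : ℝ, x * (j:ℝ) * Real.pi / p = x * θ := by
    intro x; rw [hθdef]; ring
  simp only [harg]
  set t := min m0 (p - 2 - M) with htdef
  have hN : (min (a + b) (2 * (p - 2) - (a + b)) - d) / 2 + 1 = t + 1 := by omega
  rw [hN]
  set F : ℕ → ℝ := fun k => Real.sin (((d + 2*k + 1 : ℕ):ℝ) * θ) with hFdef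
  have hFcast : ∀ k : ℕ, F k = Real.sin (((d:ℝ) + 2*(k:ℝ) + 1) * θ) := by
    intro k; rw [hFdef]; push_cast; ring_nf
  have hfull : Real.sin (((M:ℝ)+1)*θ) * Real.sin (((m0:ℝ)+1)*θ)
      = Real.sin θ * ∑ k ∈ Finset.range (m0+1), F k := by
    have := sinprod_stmt14 θ (d:ℝ) m0
    have hdm : d + m0 = M := by omega
    rw [show ((d:ℝ) + (m0:ℝ)) = (M:ℝ) by exact_mod_cast hdm] at this
    rw [this, Finset.mul_sum]
    exact Finset.sum_congr rfl fun k _ => by rw [hFcast]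
  have htail : ∑ k ∈ Finset.Ico (t+1) (m0+1), F k = 0 := by
    have h1 : ∀ k ∈ Finset.Ico (t+1) (m0+1), F k + F (p - 1 - d - k) = 0 := by
      intro k hk
      rw [Finset.mem_Ico] at hk
      have hb1 : d + 2*(p - 1 - d - k) + 1 = 2*p - (d + 2*k + 1) := by omega
      rw [hFdef]
      simp only
      rw [hb1, hflip (d + 2*k + 1) (by omega)]
      push_cast
      ring
    refine Finset.sum_involution (fun k _ => p - 1 - d - k) h1 ?_ ?_ ?_
    · intro k hk hF heq
      have h2 := h1 k hk
      rw [show p - 1 - d - k = k from heq] at h2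
      exact hF (by linarith)
    · intro k hk
      simp only [Finset.mem_Ico] at hk ⊢
      omega
    · intro k hk
      simp only [Finset.mem_Ico] at hk
      show p - 1 - d - (p - 1 - d - k) = k
      omega
  have hsplit : ∑ k ∈ Finset.range (m0+1), F k = ∑ k ∈ Finset.range (t+1), F k := by
    rw [← Finset.sum_range_add_sum_Ico F (by omega : t+1 ≤ m0+1), htail, add_zero]
  have hab : Real.sin (((a:ℝ)+1)*θ) * Real.sin (((b:ℝ)+1)*θ)
      = Real.sin (((M:ℝ)+1)*θ) * Real.sin (((m0:ℝ)+1)*θ) := by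
    rcases le_total a b with h | h
    · rw [hMdef, hm0def, max_eq_right h, min_eq_left h, mul_comm]
    · rw [hMdef, hm0def, max_eq_left h, min_eq_right h]
  rw [hab, hfull, hsplit, ← Finset.sum_div, sq]
  exact mul_div_mul_left _ _ hs
end
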